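/- arXiv:math/0107054 — 5 statements merged into one kernel-verified Lean document; each statement's English description precedes it below -/
import Mathlib

section
/- Suppose M = C_1 ··· C_N is a good monomial. If a monomial M' gives an extremal configuration equivalent to that of M, then M' is equivalent to M, i.e. M A^r = M' A^{r'} for some r, r' ≥ 0. -/
open Finset Filter MvPowerSeries

noncomputable section

/-- Formal power series in two variables `q` (index 0) and `z` (index 1). -/
abbrev PS : Type := MvPowerSeries (Fin 2) ℂ

/-- The variable `q`. -/
def Qv : PS := MvPowerSeries.X 0
/-- The variable `z`. -/
def Zv : PS := MvPowerSeries.X 1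

/-- Build a power series from its coefficient function. -/
def ofCoeff (c : (Fin 2 →₀ ℕ) → ℂ) : PS := c

/-- The exponent `q^a z^c`. -/
def idx2 (a c : ℕ) : Fin 2 →₀ ℕ := Finsupp.single 0 a + Finsupp.single 1 c

/-- The q-shift operator `(S g)(q,z) = g(q,qz)`. -/
def Sop (f : PS) : PS :=
  ofCoeff fun e => if e 1 ≤ e 0 then MvPowerSeries.coeff (idx2 (e 0 - e 1) (e 1)) f else 0

/-- The window condition for `(k,l)`-configurations: `x_j + ... + x_{j+l-1} ≤ k`. -/
def windowOK (k l : ℕ) (x : ℕ → ℕ) : Prop := ∀ j, ∑ t ∈ Finset.range l, x (j + t) ≤ k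

/-- The boundary condition: `x_0 + ... + x_i ≤ b_i` for `0 ≤ i ≤ l-2`. -/
def boundOK (l : ℕ) (b : ℕ → ℕ) (x : ℕ → ℕ) : Prop :=
  ∀ i, i < l - 1 → ∑ t ∈ Finset.range (i + 1), x t ≤ b i

/-- Admissible boundary vectors: `b_0 ≤ b_1 ≤ ... ≤ b_{l-2} ≤ k`. -/
def AdmB (k l : ℕ) (b : ℕ → ℕ) : Prop :=
  (∀ i j, i ≤ j → j < l - 1 → b i ≤ b j) ∧ ∀ i, i < l - 1 → b i ≤ k

/-- The character `χ^{(N)}_{k,l;b}(q,z)`: the coefficient of `q^a z^m` counts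
`(k,l)`-configurations of length at most `N` obeying the boundary conditions,
with `Σ j·x_j = a` and `Σ x_j = m`. -/
def chiN (k l N : ℕ) (b : ℕ → ℕ) : PS :=
  ofCoeff fun e => (Nat.card {x : ℕ → ℕ //
    windowOK k l x ∧ boundOK l b x ∧ (∀ i, N ≤ i → x i = 0) ∧
    ∑ j ∈ Finset.range N, j * x j = e 0 ∧ ∑ j ∈ Finset.range N, x j = e 1} : ℂ)

/-- The limit character `χ^{(∞)}_{k,l;b}(q,z)`. -/
def chiInf (k l : ℕ) (b : ℕ → ℕ) : PS :=
  ofCoeff fun e => (Nat.card {x : ℕ → ℕ //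
    windowOK k l x ∧ boundOK l b x ∧ (∀ i, e 0 + 1 ≤ i → x i = 0) ∧
    ∑ j ∈ Finset.range (e 0 + 1), j * x j = e 0 ∧
    ∑ j ∈ Finset.range (e 0 + 1), x j = e 1} : ℂ)

/-- The shifted boundary vector `(b_1 - i, ..., b_{l-2} - i, k - i)`. -/
def shiftB (k l : ℕ) (b : ℕ → ℕ) (i : ℕ) : ℕ → ℕ :=
  fun j => if j + 1 ≤ l - 2 then b (j + 1) - i else k - i

/-- The monomial `q^{p.1} z^{p.2}`. -/
def monoPS (p : ℕ × ℕ) : PS := Qv ^ p.1 * Zv ^ p.2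

/-- Exponents in the bracket `[P_1,...,P_l] = P_1^{b_0} P_2^{b_1-b_0} ⋯ P_l^{k-b_{l-2}}`. -/
def bexp (l k : ℕ) (b : ℕ → ℕ) (i : ℕ) : ℕ :=
  if i = 0 then b 0 else if i = l - 1 then k - b (l - 2) else b i - b (i - 1)

/-- The bracket `[P_1,...,P_l]` as a function of the boundary vector `b`. -/
def bracket (l k : ℕ) (P : ℕ → ℕ × ℕ) (b : ℕ → ℕ) : PS :=
  ∏ i ∈ Finset.range l, monoPS (P i) ^ bexp l k b i

/-- q-exponent pattern of the tuples in the list defining `V_l`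
(`r` of the entries carry a factor `z`; `c 0 = 0`). -/
def patQ (l r : ℕ) (c : ℕ → ℕ) (j : ℕ) : ℕ := if j < r then c (l - r + j) else c (j - r)

/-- z-exponent pattern of the tuples in the list defining `V_l`. -/
def patZ (r j : ℕ) : ℕ := if j < r then 1 else 0

/-- The tuples `(P_1,...,P_l)` appearing in the definition of `V_l`, namely
`q^{mk} z^{nk}[q^{c_{l-r}}z, …, q^{c_{l-1}}z, 1, q^{c_1}, …, q^{c_{l-1-r}}]`
with the common factor `q^m z^n` distributed over the entries. -/
def SimpleTuple (l : ℕ) (P : ℕ → ℕ × ℕ) : Prop :=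
  ∃ m n r : ℕ, r < l ∧ ∃ c : ℕ → ℕ, c 0 = 0 ∧ Monotone c ∧
    ∀ j, j < l → P j = (m + patQ l r c j, n + patZ r j)

/-- Admissible boundary data. -/
def Adm (k l : ℕ) : Type := {b : ℕ → ℕ // AdmB k l b}

/-- The ambient space of functions of `b` with values in power series; `V_l` is a
subspace of it. -/
abbrev VV (k l : ℕ) : Type := Adm k l → PS

/-- The simple vector `f(q,z)·[P_1,...,P_l]`. -/
def simpleVal (k l : ℕ) (f : PS) (P : ℕ → ℕ × ℕ) : VV k l := fun b => f * bracket l k P b.val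

/-- The space `V_l`, spanned by simple vectors. -/
def Vspan (k l : ℕ) : Submodule ℂ (VV k l) :=
  Submodule.span ℂ {v | ∃ f P, SimpleTuple l P ∧ v = simpleVal k l f P}

/-- Power series expansion of `1/(1 - q^{w.1} z^{w.2})` where `w` may have negative
exponents, in which case `1/(1-u) = -Σ_{n≥1} u^{-n}` is used. -/
def geomPS : ℤ × ℤ → PS := fun w =>
  if 0 ≤ w.1 ∧ 0 ≤ w.2 then
    ofCoeff fun e => ({n : ℕ | (n : ℤ) * w.1 = (e 0 : ℤ) ∧ (n : ℤ) * w.2 = (e 1 : ℤ)}.ncard : ℂ)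
  else
    ofCoeff fun e =>
      -({n : ℕ | 0 < n ∧ (n : ℤ) * w.1 = -(e 0 : ℤ) ∧ (n : ℤ) * w.2 = -(e 1 : ℤ)}.ncard : ℂ)

/-- Exponents of `S(q^{-1} z P_l / P_1)`. -/
def wExpA (l : ℕ) (P : ℕ → ℕ × ℕ) : ℤ × ℤ :=
  (((P (l-1)).1 : ℤ) + ((P (l-1)).2 : ℤ) - ((P 0).1 : ℤ) - ((P 0).2 : ℤ),
   ((P (l-1)).2 : ℤ) + 1 - ((P 0).2 : ℤ))

/-- The q-shift of a monomial: `S(q^e z^d) = q^{e+d} z^d`. -/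
def Smono (p : ℕ × ℕ) : ℕ × ℕ := (p.1 + p.2, p.2)

/-- The tuple `(S P_1, S P_1, S P_2, ..., S P_{l-1})` produced by the operator `A`. -/
def tupA (P : ℕ → ℕ × ℕ) : ℕ → ℕ × ℕ := fun j => if j = 0 then Smono (P 0) else Smono (P (j - 1))

/-- The tuple `(S(q^{-1} z P_l), S P_1, ..., S P_{l-1})` produced by the operator `B`. -/
def tupB (l : ℕ) (P : ℕ → ℕ × ℕ) : ℕ → ℕ × ℕ :=
  fun j => if j = 0 then ((P (l-1)).1 + (P (l-1)).2, (P (l-1)).2 + 1) else Smono (P (j - 1))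

/-- Defining property of the operator `A`:
`A(f[P_1,…,P_l]) = S(f/(1 - q^{-1}zP_l/P_1)·[P_1,P_1,P_2,…,P_{l-1}])`. -/
def HypA (k l : ℕ) (A : Module.End ℂ (VV k l)) : Prop :=
  ∀ f P, SimpleTuple l P →
    A (simpleVal k l f P) = simpleVal k l (Sop f * geomPS (wExpA l P)) (tupA P)

/-- Defining property of the operator `B`:
`B(f[P_1,…,P_l]) = S(f/(1 - q z^{-1}P_1/P_l)·[q^{-1}zP_l,P_1,…,P_{l-1}])`. -/
def HypB (k l : ℕ) (B : Module.End ℂ (VV k l)) : Prop :=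
  ∀ f P, SimpleTuple l P →
    B (simpleVal k l f P) =
      simpleVal k l (Sop f * geomPS (-(wExpA l P).1, -(wExpA l P).2)) (tupB l P)

/-- The vector `v_ini = [1,...,1]`. -/
def vini (k l : ℕ) : VV k l := simpleVal k l 1 (fun _ => (0, 0))

/-- `(z)_n = Π_{i=0}^{n-1} (1 - q^i z)`. -/
def pochZ (n : ℕ) : PS := ∏ i ∈ Finset.range n, (1 - Qv ^ i * Zv)
/-- `(q)_t = Π_{i=1}^{t} (1 - q^i)`. -/
def pochQ (t : ℕ) : PS := ∏ i ∈ Finset.range t, (1 - Qv ^ (i + 1))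
/-- `(q^t z)_∞ = Π_{i≥0} (1 - q^{t+i} z)`, defined coefficientwise. -/
def pochInfQZ (t : ℕ) : PS :=
  ofCoeff fun e =>
    MvPowerSeries.coeff e (∏ i ∈ Finset.range (e 0 + 1), (1 - Qv ^ (t + i) * Zv))
/-- `(z)_∞ = Π_{i≥0} (1 - q^i z)`. -/
def pochInfZ : PS := pochInfQZ 0

/-- The vector `v_∞ = [1,...,1]/(z)_∞`. -/
def vinf (k l : ℕ) : VV k l := simpleVal k l pochInfZ⁻¹ (fun _ => (0, 0))

/-- Application of a monomial (word) in the operators `A` (letter `true`) and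
`B` (letter `false`) to a vector; the leftmost letter acts last read, i.e.
`C_1 C_2 ⋯ C_m v = C_1 (C_2 (⋯ (C_m v)))`. -/
def wact (k l : ℕ) (A B : Module.End ℂ (VV k l)) (w : List Bool) (v : VV k l) : VV k l :=
  w.foldr (fun c u => if c then A u else B u) v

/-- A good monomial: `C_i = A` implies `C_{i+l-1} = A` (letters 0-indexed, `true = A`). -/
def GoodWord (l : ℕ) (w : List Bool) : Prop :=
  ∀ i, i + (l - 1) < w.length → w.getD i true = true → w.getD (i + (l - 1)) true = true

/-- Canonical representative of an equivalence class of monomials: no trailing `A`s. -/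
def Reduced (w : List Bool) : Prop := w = [] ∨ w.getLast? = some false

/-- Symbols for marked vertices: `•`, `∘`, `×`. -/
inductive MSym : Type
  | dot | circ | mark
  deriving DecidableEq

/-- The `A`-arrow on (possibly marked) vertices. -/
def stepA : List MSym → List MSym
  | MSym.circ :: J => J ++ [MSym.circ]
  | MSym.dot :: _ :: J => MSym.dot :: (J ++ [MSym.circ])
  | MSym.mark :: MSym.dot :: J => MSym.dot :: (J ++ [MSym.circ])
  | MSym.mark :: MSym.circ :: J => MSym.mark :: (J ++ [MSym.circ])
  | MSym.mark :: MSym.mark :: J => MSym.dot :: (J ++ [MSym.circ])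
  | v => v

/-- The `B`-arrow on (possibly marked) vertices: rotation. -/
def stepB : List MSym → List MSym
  | [] => []
  | x :: J => J ++ [x]

/-- The marked path of the monomial `w` (extended by `A`s at positions beyond its
length), starting from `[•,…,•,×]`; `mstate l w t` is the vertex after `t` arrows. -/
def mstate (l : ℕ) (w : List Bool) : ℕ → List MSym
  | 0 => List.replicate (l - 1) MSym.dot ++ [MSym.mark]
  | t + 1 => (if w.getD t true then stepA else stepB) (mstate l w t)

/-- The `t`-th vertex of the marked path has the form `[× • J]`, i.e. the `t`-th
arrow is of type (i) or (ii). -/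
def CSrc (l : ℕ) (w : List Bool) (t : ℕ) : Prop :=
  (mstate l w t).getD 0 MSym.circ = MSym.mark ∧ (mstate l w t).getD 1 MSym.circ = MSym.dot

/-- `(N A K, N B K)` is a cancellation pair: `N A K` is good and the displayed `A`
is its cancellation `A`-arrow (the last arrow of type (i) or (ii)). -/
def CancelPair (l : ℕ) (N K : List Bool) : Prop :=
  GoodWord l (N ++ true :: K) ∧ CSrc l (N ++ true :: K) N.length ∧
    ∀ t, N.length < t → ¬ CSrc l (N ++ true :: K) t

/-- `w` is good and has a cancellation `A`-arrow. -/
def HasCA (l : ℕ) (w : List Bool) : Prop :=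
  GoodWord l w ∧ ∃ t, w.getD t true = true ∧ CSrc l w t ∧ ∀ t', t < t' → ¬ CSrc l w t'

/-- `w` is good and has a cancellation `B`-arrow. -/
def HasCB (l : ℕ) (w : List Bool) : Prop :=
  GoodWord l w ∧ ∃ t, w.getD t true = false ∧ CSrc l w t ∧ ∀ t', t < t' → ¬ CSrc l w t'

/-- The index of the cancellation arrow. -/
def cancelIdx (l : ℕ) (w : List Bool) : ℕ :=
  sInf {t | CSrc l w t ∧ ∀ t', t < t' → ¬ CSrc l w t'}

/-- Flip the letter at the cancellation arrow. -/
def flipCancel (l : ℕ) (w : List Bool) : List Bool :=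
  (w ++ List.replicate (cancelIdx l w + 1 - w.length) true).set (cancelIdx l w) false

/-- The lattice `Λ` is `ℕ → ℤ` supported on `{0,…,l-1}`; coordinates `0,…,l-2`
are the generators `b_0,…,b_{l-2}` and coordinate `l-1` is the generator `k`.
`Ma` is the map `M_a`: `b_i ↦ b_{i+1}` (`i ≤ l-3`), `b_{l-2} ↦ k`, `k ↦ k`. -/
def Ma (l : ℕ) (v : ℕ → ℤ) : ℕ → ℤ := fun j =>
  if j = 0 then 0
  else if j = l - 1 then v (l - 2) + v (l - 1)
  else if j < l - 1 then v (j - 1)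
  else 0

/-- The map `M_b`: `b_i ↦ b_{i+1} - b_0` (`i ≤ l-3`), `b_{l-2} ↦ k - b_0`, `k ↦ k`. -/
def Mb (l : ℕ) (v : ℕ → ℤ) : ℕ → ℤ := fun j =>
  if j = 0 then -(∑ i ∈ Finset.range (l - 1), v i)
  else if j = l - 1 then v (l - 2) + v (l - 1)
  else if j < l - 1 then v (j - 1)
  else 0

/-- The representative `ī ∈ {1,…,l}` of `i` modulo `l`. -/
def ibar (l : ℕ) (i : ℤ) : ℕ := ((i - 1) % (l : ℤ)).toNat + 1

/-- `ι_{i,j} = b_{ī-2} - b_{j̄-2} + k·δ(ī ≤ j̄)` (with `b_{-1} = 0`). -/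
def iotaL (l : ℕ) (i j : ℤ) : ℕ → ℤ := fun t =>
  (if 2 ≤ ibar l i ∧ t = ibar l i - 2 then 1 else 0)
  - (if 2 ≤ ibar l j ∧ t = ibar l j - 2 then 1 else 0)
  + (if ibar l i ≤ ibar l j ∧ t = l - 1 then 1 else 0)

/-- `M_{c_1} ∘ ⋯ ∘ M_{c_m}` applied to `v`, where `c_i = a` if the `i`-th letter is
`A` (`true`) and `c_i = b` otherwise. -/
def applyWord (l : ℕ) (w : List Bool) (v : ℕ → ℤ) : ℕ → ℤ :=
  w.foldr (fun c u => if c then Ma l u else Mb l u) v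

/-- The extremal configuration of the monomial `w`:
`x_i = 0` if `C_{i+1} = A` and `x_i = M_{c_1} ∘ ⋯ ∘ M_{c_i}(b_0)` if `C_{i+1} = B`
(entries beyond the length of `w` are `0`, matching equivalence of configurations). -/
def xconf (l : ℕ) (w : List Bool) (i : ℕ) : ℕ → ℤ :=
  if w.getD i true = true then 0 else applyWord l (w.take i) (iotaL l 2 1)

/-- The `A`-arrow of the summation graph (vertices as arrays of `•` = `true`,
`∘` = `false`). -/
def vstepA : List Bool → List Bool
  | false :: J => J ++ [false]
  | true :: _ :: J => true :: (J ++ [false])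
  | v => v

/-- The `B`-arrow of the summation graph: rotation. -/
def vstepB : List Bool → List Bool
  | [] => []
  | x :: J => J ++ [x]

/-- The path associated with `w` in the summation graph, starting from
`I_top = [•,…,•]`; `vstate l w t` is the vertex `I^{(t)}`. -/
def vstate (l : ℕ) (w : List Bool) (t : ℕ) : List Bool :=
  (w.take t).foldl (fun v c => if c then vstepA v else vstepB v) (List.replicate l true)

/-- The evolution of the vector part of a simple vector under one operator. -/
def tupStep (l : ℕ) (c : Bool) (P : ℕ → ℕ × ℕ) : ℕ → ℕ × ℕ :=
  if c then tupA P else tupB l P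

/-- The vector part of `M v_∞` for a word `M`. -/
def wordTuple (l : ℕ) : List Bool → ℕ → ℕ × ℕ
  | [] => fun _ => (0, 0)
  | c :: w => tupStep l c (wordTuple l w)

/-- The scalar part of `M v_∞` for a word `M`. -/
def wordScalar (l : ℕ) : List Bool → PS
  | [] => pochInfZ⁻¹
  | c :: w =>
      Sop (wordScalar l w) *
        (if c then geomPS (wExpA l (wordTuple l w))
         else geomPS (-(wExpA l (wordTuple l w)).1, -(wExpA l (wordTuple l w)).2))

/-- A cancellation block `𝔹_s = C_1 ⋯ C_{l+s}` with `C_1 = C_{s+2} = C_l = B`,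
`C_2 = ⋯ = C_{s+1} = A`, `C_{l+1} = ⋯ = C_{l+s} = A` (0-indexed positions). -/
def IsBlock (l s : ℕ) (w : List Bool) : Prop :=
  s ≤ l - 2 ∧ w.length = l + s ∧
  w.getD 0 true = false ∧ w.getD (s + 1) true = false ∧ w.getD (l - 1) true = false ∧
  (∀ i, 1 ≤ i → i ≤ s → w.getD i true = true) ∧
  (∀ i, l ≤ i → i < l + s → w.getD i true = true)

/-- The block `𝔼_i = C_2 ⋯ C_l` where `C_j = B` iff `j ∈ {σ(1),…,σ(i)}`
(1-based values of the permutation; `true = A`, `false = B`). -/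
def Eblock (l : ℕ) (σ : Equiv.Perm (Fin l)) (i : ℕ) : List Bool :=
  (List.range (l - 1)).map fun t => decide (∀ a : Fin l, (a : ℕ) < i → (σ a : ℕ) ≠ t + 1)

/-- The word `𝔼_{l-2}^{n_{l-2}} ⋯ 𝔼_1^{n_1}`. -/
def coreWord (l : ℕ) (σ : Equiv.Perm (Fin l)) (n : ℕ → ℤ) : List Bool :=
  (((List.range (l - 2)).reverse.map fun i' =>
    (List.replicate (n (i' + 1)).toNat (Eblock l σ (i' + 1))).flatten)).flatten

/-- The word `B^{n_{l-1}} 𝔼_{l-2}^{n_{l-2}} ⋯ 𝔼_1^{n_1}`; for `n_{l-1} < 0` the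
first `-n_{l-1}` letters (which are `B`s) are removed instead. -/
def theWord (l : ℕ) (σ : Equiv.Perm (Fin l)) (n : ℕ → ℤ) : List Bool :=
  if 0 ≤ n (l - 1) then List.replicate (n (l - 1)).toNat false ++ coreWord l σ n
  else (coreWord l σ n).drop (-(n (l - 1))).toNat

/-- `σ(1) = l` and `σ(l) = 1` (in 1-based notation). -/
def SigmaCond (l : ℕ) (σ : Equiv.Perm (Fin l)) : Prop :=
  (∀ a : Fin l, (a : ℕ) = 0 → (σ a : ℕ) = l - 1) ∧
  (∀ a : Fin l, (a : ℕ) = l - 1 → (σ a : ℕ) = 0)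

/-- The conditions on `n = (n_1,…,n_{l-1})`: `n_i ≥ 0` for `i ≤ l-2`,
`n_{l-1} ≥ 2 - σ(l-1)`, `n_i > 0` whenever `σ(i) < σ(i+1)`; the unused entries
are normalized to `0`. -/
def NCond (l : ℕ) (σ : Equiv.Perm (Fin l)) (n : ℕ → ℤ) : Prop :=
  (∀ i, 1 ≤ i → i ≤ l - 2 → 0 ≤ n i) ∧
  (∀ a : Fin l, (a : ℕ) = l - 2 → (2 : ℤ) - (((σ a : ℕ) : ℤ) + 1) ≤ n (l - 1)) ∧
  (∀ i, 1 ≤ i → i ≤ l - 1 → ∀ a b : Fin l, (a : ℕ) = i - 1 → (b : ℕ) = i →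
      (σ a : ℕ) < (σ b : ℕ) → 0 < n i) ∧
  (∀ i, i = 0 ∨ l - 1 < i → n i = 0)

end

/-!
Pair `Λ` with the functional `β(b_j) = j + 1`, `β(k) = l`. Pulling `β` back along
`M_{c_1} ∘ ⋯ ∘ M_{c_i}` and evaluating at `b_0` gives the slack
`min(i, l-1) + 1 - (β x_{i-l+1} + ⋯ + β x_{i-1})` of the window ending at `i`, where `x` is the
extremal configuration. For a good monomial this slack is always positive, so `x_i ≠ 0` exactly when
`C_{i+1} = B`. Going along the word, once the first `i` letters of `M` and `M'` agree their
`x_i` are given by the same formula, so the `i+1`-st letters agree as well.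
-/

namespace ExtremalConfig

def pairing (l : ℕ) (ρ v : ℕ → ℤ) : ℤ := ∑ t ∈ Finset.range l, ρ t * v t

def dualStep (l : ℕ) (c : Bool) (ρ : ℕ → ℤ) : ℕ → ℤ := fun j =>
  if j = l - 1 then ρ (l - 1)
  else if j < l - 1 then ρ (j + 1) - (if c then 0 else ρ 0)
  else 0

lemma pairing_step {l : ℕ} (hl : 2 ≤ l) (c : Bool) (ρ v : ℕ → ℤ) :
    pairing l ρ (if c then Ma l v else Mb l v) = pairing l (dualStep l c ρ) v := by
  obtain ⟨m, rfl⟩ : ∃ m, l = m + 2 := ⟨l - 2, by omega⟩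
  set d : ℤ := if c then 0 else ρ 0
  have hM : ∀ t ∈ range m,
      ρ (t + 1) * (if c then Ma (m + 2) v else Mb (m + 2) v) (t + 1) = ρ (t + 1) * v t := by
    intro t ht
    have ht := mem_range.mp ht
    have h0 : t + 1 ≠ 0 := by omega
    have h1 : t + 1 ≠ m + 2 - 1 := by omega
    have h2 : t + 1 < m + 2 - 1 := by omega
    cases c <;> simp only [Bool.false_eq_true, ↓reduceIte, Ma, Mb, if_neg h0, if_neg h1, if_pos h2,
      add_tsub_cancel_right]
  have hD : ∀ t ∈ range m, dualStep (m + 2) c ρ t * v t = ρ (t + 1) * v t - d * v t := by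
    intro t ht
    have ht := mem_range.mp ht
    rw [dualStep, if_neg (by omega), if_pos (by omega), sub_mul]
  have hM0 : ρ 0 * (if c then Ma (m + 2) v else Mb (m + 2) v) 0 = -(d * ∑ t ∈ range (m + 1), v t) := by
    cases c <;> simp [d, Ma, Mb]
  have hMtop : (if c then Ma (m + 2) v else Mb (m + 2) v) (m + 1) = v m + v (m + 1) := by
    cases c <;> simp [Ma, Mb]
  have hDm : dualStep (m + 2) c ρ m = ρ (m + 1) - d := by simp [dualStep, d]
  have hDtop : dualStep (m + 2) c ρ (m + 1) = ρ (m + 1) := by simp [dualStep]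
  unfold pairing
  rw [sum_range_succ', sum_range_succ, sum_congr rfl hM, sum_range_succ, sum_range_succ,
    sum_congr rfl hD, sum_sub_distrib, ← mul_sum, hM0, hMtop, hDm, hDtop, sum_range_succ]
  ring

lemma pairing_applyWord {l : ℕ} (hl : 2 ≤ l) (u : List Bool) (ρ v : ℕ → ℤ) :
    pairing l ρ (applyWord l u v) = pairing l (u.foldl (fun ρ c => dualStep l c ρ) ρ) v := by
  induction u generalizing ρ with
  | nil => rfl
  | cons c u ih => exact (pairing_step hl c ρ _).trans (ih _)

lemma pairing_single_zero {l : ℕ} (hl : 0 < l) (ρ : ℕ → ℤ) : pairing l ρ (Pi.single 0 1) = ρ 0 := by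
  simp [pairing, Pi.single_apply, hl]

lemma iotaL_two_one {l : ℕ} (hl : 2 ≤ l) : iotaL l 2 1 = Pi.single 0 1 := by
  have h1 : ibar l 1 = 1 := by simp [ibar]
  have h2 : ibar l 2 = 2 := by
    simp [ibar, Int.emod_eq_of_lt (show (0 : ℤ) ≤ 1 by norm_num) (by omega : (1 : ℤ) < l)]
  funext t
  simp [iotaL, h1, h2, Pi.single_apply]

/-- The functional `β` with `β(b_j) = j + 1` and `β(k) = l`. -/
def cap (l j : ℕ) : ℤ := ((min j (l - 1) : ℕ) : ℤ) + 1

/-- `dualTraj l c i = β ∘ M_{c 0} ∘ ⋯ ∘ M_{c (i-1)}`, as a vector of coefficients. -/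
def dualTraj (l : ℕ) (c : ℕ → Bool) : ℕ → ℕ → ℤ
  | 0 => cap l
  | i + 1 => dualStep l (c i) (dualTraj l c i)

lemma foldl_take_eq_dualTraj (l : ℕ) (w : List Bool) {i : ℕ} (hi : i ≤ w.length) :
    (w.take i).foldl (fun ρ c => dualStep l c ρ) (cap l) = dualTraj l (w.getD · true) i := by
  induction i with
  | zero => rfl
  | succ i ih =>
    rw [List.take_succ_eq_append_getElem (by omega), List.foldl_append, ih (by omega),
      ← List.getD_eq_getElem w true]
    rfl

/-- `β(x_t)` for the extremal configuration `x` of the letter sequence `c`. -/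
def extremalValue (l : ℕ) (c : ℕ → Bool) (t : ℕ) : ℤ := if c t then 0 else dualTraj l c t 0

lemma dualTraj_apply {l : ℕ} (hl : 2 ≤ l) (c : ℕ → Bool) (i : ℕ) {j : ℕ} (hj : j < l) :
    dualTraj l c i j = cap l (i + j) - ∑ t ∈ Ico (i + j + 1 - l) i, extremalValue l c t := by
  induction i generalizing j with
  | zero => simp [dualTraj, show j + 1 - l = 0 by omega]
  | succ i ih =>
    simp only [dualTraj, dualStep]
    by_cases hj1 : j = l - 1
    · rw [if_pos hj1, ih (by omega), show i + (l - 1) + 1 - l = i by omega,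
        show i + 1 + j + 1 - l = i + 1 by omega]
      simp only [Ico_self, sum_empty, cap]
      congr 3
      omega
    · rw [if_neg hj1, if_pos (by omega), ih (by omega),
        show i + 1 + j + 1 - l = i + (j + 1) + 1 - l by omega,
        sum_Ico_succ_top (by omega : i + (j + 1) + 1 - l ≤ i), show i + (j + 1) = i + 1 + j by omega]
      simp only [extremalValue]
      ring

lemma dualTraj_succ_zero {l : ℕ} (hl : 2 ≤ l) (c : ℕ → Bool) (i : ℕ) :
    dualTraj l c (i + 1) 0 + extremalValue l c i
      = dualTraj l c i 0 + (cap l (i + 1) - cap l i)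
        + (if l ≤ i + 1 then extremalValue l c (i + 1 - l) else 0) := by
  rw [dualTraj_apply hl c (i + 1) (by omega), dualTraj_apply hl c i (by omega)]
  simp only [add_zero]
  split_ifs with h
  · rw [show i + 1 + 1 - l = i + 1 - l + 1 by omega, sum_Ico_succ_top (by omega : i + 1 - l + 1 ≤ i),
      sum_eq_sum_Ico_succ_bot (by omega : i + 1 - l < i)]
    ring
  · rw [show i + 1 + 1 - l = 0 by omega, show i + 1 - l = 0 by omega, sum_Ico_succ_top (Nat.zero_le i)]
    ring

/-- The slack of the window ending at `i` stays positive: where the letter is `B`, goodness puts a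
`B` also `l - 1` places earlier, whose extremal value is released from the window. -/
lemma dualTraj_zero_pos {l : ℕ} (hl : 2 ≤ l) {c : ℕ → Bool}
    (hc : ∀ i, c i = true → c (i + (l - 1)) = true) (i : ℕ) : 0 < dualTraj l c i 0 := by
  induction i using Nat.strong_induction_on with
  | _ i ih =>
  match i with
  | 0 => simp [dualTraj, cap]
  | i + 1 =>
    have hval : ∀ t ≤ i, 0 ≤ extremalValue l c t := fun t ht => by
      unfold extremalValue; split_ifs
      exacts [le_rfl, (ih t (by omega)).le]
    have hcap : 0 ≤ cap l (i + 1) - cap l i := by simp only [cap]; omega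
    have step := dualTraj_succ_zero hl c i
    cases hci : c i
    · have hval_i : extremalValue l c i = dualTraj l c i 0 := by simp [extremalValue, hci]
      by_cases h : l ≤ i + 1
      · have hB : c (i + 1 - l) = false := by
          by_contra hA
          have := hc _ (by simpa using hA)
          rw [show i + 1 - l + (l - 1) = i by omega, hci] at this
          exact absurd this (by decide)
        have : extremalValue l c (i + 1 - l) = dualTraj l c (i + 1 - l) 0 := by
          simp [extremalValue, hB]
        have := ih (i + 1 - l) (by omega)
        simp only [h, if_true] at step
        omega
      · have : cap l (i + 1) - cap l i = 1 := by simp only [cap]; omega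
        simp only [h, if_false] at step
        omega
    · have hval_i : extremalValue l c i = 0 := by simp [extremalValue, hci]
      have := ih i (by omega)
      have : 0 ≤ if l ≤ i + 1 then extremalValue l c (i + 1 - l) else 0 := by
        split_ifs
        exacts [hval _ (by omega), le_rfl]
      omega

end ExtremalConfig

open ExtremalConfig

lemma List.getD_append_replicate (u : List Bool) (n i : ℕ) :
    (u ++ List.replicate n true).getD i true = u.getD i true := by
  rcases lt_or_ge i u.length with h | h
  · exact List.getD_append _ _ _ _ h
  · rw [List.getD_eq_default u true h, List.getD_append_right _ _ _ _ h]
    simp only [List.getD_eq_getElem?_getD, List.getElem?_replicate]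
    split_ifs <;> rfl

namespace GoodWord

variable {l : ℕ} {w : List Bool}

lemma getD_add (hw : GoodWord l w) (i : ℕ) (hi : w.getD i true = true) :
    w.getD (i + (l - 1)) true = true := by
  rcases lt_or_ge (i + (l - 1)) w.length with h | h
  · exact hw i h hi
  · exact List.getD_eq_default w true h

lemma append_replicate (hw : GoodWord l w) (n : ℕ) : GoodWord l (w ++ List.replicate n true) := by
  intro i _ hi
  rw [List.getD_append_replicate] at hi ⊢
  exact hw.getD_add i hi

lemma applyWord_take_ne_zero (hl : 2 ≤ l) (hw : GoodWord l w) {i : ℕ} (hi : i ≤ w.length) :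
    applyWord l (w.take i) (iotaL l 2 1) ≠ 0 := by
  intro h
  have key := pairing_applyWord hl (w.take i) (cap l) (iotaL l 2 1)
  rw [h, foldl_take_eq_dualTraj l w hi, iotaL_two_one hl, pairing_single_zero (by omega)] at key
  have hzero : pairing l (cap l) 0 = 0 := by simp [pairing]
  exact (dualTraj_zero_pos hl hw.getD_add i).ne' (key.symm.trans hzero)

end GoodWord

lemma xconf_append_replicate (l : ℕ) (u : List Bool) (n i : ℕ) :
    xconf l (u ++ List.replicate n true) i = xconf l u i := by
  unfold xconf
  rw [List.getD_append_replicate]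
  split_ifs with h
  · rfl
  · have hi : i ≤ u.length := by
      by_contra hh
      exact h (List.getD_eq_default u true (by omega))
    rw [List.take_append, Nat.sub_eq_zero_of_le hi, List.take_zero, List.append_nil]

lemma eq_of_xconf_eq {l : ℕ} (hl : 2 ≤ l) {W W' : List Bool} (hW : GoodWord l W)
    (hlen : W.length = W'.length) (hconf : ∀ i, xconf l W i = xconf l W' i) : W = W' := by
  have htake : ∀ i ≤ W.length, W.take i = W'.take i := by
    intro i hi
    induction i with
    | zero => simp
    | succ i ih =>
      have hi' : i < W.length := hi
      have hletter : W[i] = W'[i]'(hlen ▸ hi') := by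
        have hx := hconf i
        simp only [xconf, ← ih hi'.le, List.getD_eq_getElem _ _ hi',
          List.getD_eq_getElem _ _ (hlen ▸ hi')] at hx
        have hne := hW.applyWord_take_ne_zero hl hi'.le
        cases hc : W[i] <;> cases hc' : W'[i]'(hlen ▸ hi') <;> simp_all
      rw [List.take_succ_eq_append_getElem hi', List.take_succ_eq_append_getElem (hlen ▸ hi'),
        ih hi'.le, hletter]
  have := htake W.length le_rfl
  rwa [List.take_length, hlen, List.take_length] at this

/-- If `M` is a good monomial and a monomial `M'` gives an extremal configuration
equivalent to that of `M`, then `M'` is equivalent to `M`, i.e.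
`M A^r = M' A^{r'}` for some `r, r' ≥ 0`. -/
theorem stmt11 (l : ℕ) (hl : 2 ≤ l) (w w' : List Bool) (hw : GoodWord l w)
    (hconf : ∀ i, xconf l w i = xconf l w' i) :
    ∃ r r' : ℕ, w ++ List.replicate r true = w' ++ List.replicate r' true := by
  set L := max w.length w'.length
  refine ⟨L - w.length, L - w'.length, eq_of_xconf_eq hl (hw.append_replicate _) ?_ fun i => ?_⟩
  · simp only [List.length_append, List.length_replicate]
    omega
  · rw [xconf_append_replicate, xconf_append_replicate, hconf]
end

section
/- A monomial M = C_1 ··· C_m in the letters A, B is good if and only if the path associated with M in the summation graph passes through only good vertices, i.e. every vertex I^{(0)}, I^{(1)}, ..., I^{(m)} of the path contains the element 1. -/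
open Finset Filter MvPowerSeries

noncomputable section

/-
Along the path of `w`, as long as every vertex is good, the entries `2, …, l` of `I^{(t)}`
record the letters `C_{t-l+2}, …, C_t` (`∘` exactly for an `A`; letters `C_i` with `i < 1` count
as `B`), because both arrows shift a
good vertex to the left and append `∘` for `A`, `•` for `B`. Hence `I^{(t+1)}` is good iff
`C_{t+1} = A` or the entry `2` of `I^{(t)}` is `•`, i.e. iff `C_{t+2-l} = A → C_{t+1} = A`,
which is the goodness condition at `i = t + 2 - l`.
-/

def vstep (v : List Bool) (c : Bool) : List Bool := if c then vstepA v else vstepB v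

lemma length_vstep (v : List Bool) (c : Bool) : (vstep v c).length = v.length := by
  match c, v with
  | true, [] | true, [true] | false, [] => rfl
  | true, false :: _ | true, true :: _ :: _ | false, _ :: _ => simp [vstep, vstepA, vstepB]

section GoodVertex

variable {v : List Bool} (hv : v.getD 0 false = true) (hlen : 2 ≤ v.length)
include hv hlen

lemma exists_eq_cons_cons : ∃ b rest, v = true :: b :: rest := by
  rcases v with _ | ⟨a, _ | ⟨b, rest⟩⟩
  all_goals simp_all

lemma getD_vstep_zero (c : Bool) : (vstep v c).getD 0 false = (c || v.getD 1 false) := by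
  obtain ⟨b, rest, rfl⟩ := exists_eq_cons_cons hv hlen
  cases c <;> simp [vstep, vstepA, vstepB]

lemma getD_vstep_of_lt (c : Bool) {j : ℕ} (hj : 1 ≤ j) (hjv : j + 1 < v.length) :
    (vstep v c).getD j false = v.getD (j + 1) false := by
  obtain ⟨b, rest, rfl⟩ := exists_eq_cons_cons hv hlen
  obtain ⟨j, rfl⟩ : ∃ j', j = j' + 1 := ⟨j - 1, by omega⟩
  have hj' : j < rest.length := by simp at hjv; omega
  cases c <;> simp [vstep, vstepA, vstepB, List.getElem?_append_left hj']

lemma getD_vstep_last (c : Bool) : (vstep v c).getD (v.length - 1) false = !c := by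
  obtain ⟨b, rest, rfl⟩ := exists_eq_cons_cons hv hlen
  cases c <;> simp [vstep, vstepA, vstepB]

end GoodVertex

lemma length_vstate (l : ℕ) (w : List Bool) (t : ℕ) : (vstate l w t).length = l := by
  suffices ∀ (u v : List Bool), (u.foldl vstep v).length = v.length by
    exact (this (w.take t) (List.replicate l true)).trans List.length_replicate
  intro u
  induction u with
  | nil => simp
  | cons c u ih => intro v; rw [List.foldl_cons, ih, length_vstep]

lemma vstate_zero (l : ℕ) (w : List Bool) : vstate l w 0 = List.replicate l true := rfl

lemma vstate_succ (l : ℕ) (w : List Bool) {t : ℕ} (ht : t < w.length) :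
    vstate l w (t + 1) = vstep (vstate l w t) (w.getD t true) := by
  rw [vstate, List.take_add_one, List.foldl_append, List.getElem?_eq_getElem ht,
    List.getD_eq_getElem _ _ ht]
  rfl

section Path

variable {l : ℕ} {w : List Bool}

lemma vstate_getD_eq_false_iff {t : ℕ} (ht : t ≤ w.length)
    (hgood : ∀ s < t, (vstate l w s).getD 0 false = true) {j : ℕ} (hj : 1 ≤ j) (hjl : j < l) :
    (vstate l w t).getD j false = false ↔ l ≤ t + j ∧ w.getD (t + j - l) true = true := by
  induction t generalizing j with
  | zero => simp [vstate_zero, hjl]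
  | succ t ih =>
    have hlen := length_vstate l w t
    have hv := hgood t (by omega)
    rw [vstate_succ l w (by omega : t < w.length)]
    rcases Nat.lt_or_ge (j + 1) l with hjl' | hjl'
    · rw [getD_vstep_of_lt hv (by omega) _ hj (by omega),
        ih (by omega) (fun s hs => hgood s (by omega)) (by omega) hjl', Nat.add_right_comm,
        ← Nat.add_assoc]
    · obtain rfl : j = l - 1 := by omega
      have hlast := getD_vstep_last hv (by omega) (w.getD t true)
      rw [hlen] at hlast
      rw [hlast, show t + 1 + (l - 1) - l = t by omega]
      simp only [Bool.not_eq_eq_eq_not, Bool.not_false]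
      exact (and_iff_right (by omega)).symm

lemma vstate_succ_good_iff (hl : 2 ≤ l) {t : ℕ} (ht : t < w.length)
    (hgood : ∀ s ≤ t, (vstate l w s).getD 0 false = true) :
    (vstate l w (t + 1)).getD 0 false = true ↔
      (l ≤ t + 1 → w.getD (t + 1 - l) true = true → w.getD t true = true) := by
  have hentry := vstate_getD_eq_false_iff ht.le (fun s hs => hgood s hs.le) le_rfl (by omega)
  rw [vstate_succ l w ht, getD_vstep_zero (hgood t le_rfl) (by rw [length_vstate]; omega)]
  generalize w.getD t true = c, (vstate l w t).getD 1 false = b at hentry ⊢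
  cases c <;> cases b <;> simp_all

end Path

/-- A monomial is good if and only if its path in the summation graph passes
through only good vertices (vertices containing `1`, i.e. with first entry `•`). -/
theorem stmt12 (l : ℕ) (hl : 2 ≤ l) (w : List Bool) :
    GoodWord l w ↔ ∀ t, t ≤ w.length → (vstate l w t).getD 0 false = true := by
  constructor
  · intro hw t ht
    induction t using Nat.strong_induction_on with
    | _ t ih =>
      rcases t with _ | t
      · simp [vstate_zero, show 0 < l by omega]
      · have hgood : ∀ s ≤ t, (vstate l w s).getD 0 false = true :=
          fun s hs => ih s (by omega) (by omega)
        refine (vstate_succ_good_iff hl ht hgood).2 fun hle hA => ?_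
        simpa [show t + 1 - l + (l - 1) = t by omega] using hw (t + 1 - l) (by omega) hA
  · intro hgood i hi hA
    have key := (vstate_succ_good_iff hl hi fun s hs => hgood s (by omega)).1
      (hgood _ (by omega)) (by omega)
    exact key (by rwa [show i + (l - 1) + 1 - l = i by omega])
end
end

section
/- The map sending M = NAK ∈ G_A (where the displayed A is the cancellation A-arrow of M) to NBK is a bijection from G_A onto G_B; for M = NAK ∈ G_A, the monomial NBK is good and the displayed B is its cancellation B-arrow. -/
open Finset Filter MvPowerSeries

/-!
Along the marked path of a good word the `∘`s record the `A`-arrows of the last `l` steps, and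
the mark `×` moves one place to the left per arrow, re-entering at the right end after a `B`-arrow
out of position 0. An `A`-arrow out of `[ו J]` destroys the mark, so such an arrow is always the
last one of type (i) or (ii). After a `B`-arrow out of `[ו J]` at time `n` the mark walks back to
position 1, reached at time `n + l - 1`: an `A`-arrow there kills it, while a `B`-arrow returns it
to position 0, from where goodness forces another `[ו J]` later on. Hence, for a good word with
`[ו J]` at time `n`, exchanging an `A`-arrow for a `B`-arrow at time `n` preserves goodness and
the property that `n` is the cancellation index, in both directions: with the `B`-arrow, `n` is
the last such time iff arrow `n + l - 1` is an `A`-arrow, which is exactly what goodness demands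
of the word with the `A`-arrow.
-/

section MarkedPath

variable {l : ℕ}

theorem goodWord_iff {w : List Bool} :
    GoodWord l w ↔ ∀ i, w.getD i true = true → w.getD (i + (l - 1)) true = true := by
  refine ⟨fun h i hi => ?_, fun h i _ hi => h i hi⟩
  by_cases hlen : i + (l - 1) < w.length
  · exact h i hlen hi
  · exact List.getD_eq_default _ _ (not_lt.mp hlen)

def headA : MSym → MSym → MSym
  | MSym.circ, y => y
  | MSym.mark, MSym.circ => MSym.mark
  | _, _ => MSym.dot

theorem step_cons_cons (c : Bool) (x y : MSym) (J : List MSym) :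
    (if c then stepA else stepB) (x :: y :: J) =
      (if c then headA x y else y) :: (J ++ [if c then MSym.circ else x]) := by
  cases c <;> cases x <;> cases y <;> rfl

theorem mstate_succ (w : List Bool) (t : ℕ) :
    mstate l w (t + 1) = (if w.getD t true then stepA else stepB) (mstate l w t) := rfl

theorem length_mstate (hl : 2 ≤ l) (w : List Bool) (t : ℕ) : (mstate l w t).length = l := by
  induction t with
  | zero => simp [mstate]; omega
  | succ t ih =>
    match h : mstate l w t, ih with
    | x :: y :: J, ih => rw [mstate_succ, h, step_cons_cons]; simp at ih ⊢; omega
    | [], ih | [_], ih => simp at ih; omega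

theorem getD_mstate_succ (hl : 2 ≤ l) (w : List Bool) (t q : ℕ) :
    (mstate l w (t + 1)).getD q MSym.circ =
      if q = 0 then
        (if w.getD t true then headA ((mstate l w t).getD 0 MSym.circ)
          ((mstate l w t).getD 1 MSym.circ) else (mstate l w t).getD 1 MSym.circ)
      else if q + 1 < l then (mstate l w t).getD (q + 1) MSym.circ
      else if q + 1 = l then
        (if w.getD t true then MSym.circ else (mstate l w t).getD 0 MSym.circ)
      else MSym.circ := by
  have hlen := length_mstate hl w t
  match h : mstate l w t, hlen with
  | x :: y :: J, hlen =>
    simp only [List.length_cons] at hlen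
    rw [mstate_succ, h, step_cons_cons]
    rcases q with _ | q
    · simp
    · simp only [List.getD_eq_getElem?_getD]
      grind
  | [], hlen | [_], hlen => simp at hlen; omega

theorem getD_mstate_of_le (hl : 2 ≤ l) (w : List Bool) {t q : ℕ} (hq : l ≤ q) :
    (mstate l w t).getD q MSym.circ = MSym.circ :=
  List.getD_eq_default _ _ (by rw [length_mstate hl]; exact hq)

theorem getD_mstate_eq_circ (hl : 2 ≤ l) {w : List Bool} (hg : GoodWord l w) (t : ℕ) :
    (mstate l w t).getD 0 MSym.circ ≠ MSym.circ ∧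
      ∀ j, 1 ≤ j → j < l → ((mstate l w t).getD j MSym.circ = MSym.circ ↔
        l ≤ t + j ∧ w.getD (t + j - l) true = true) := by
  rw [goodWord_iff] at hg
  induction t with
  | zero =>
    simp only [mstate, List.getD_eq_getElem?_getD]
    exact ⟨by grind, fun j _ _ => by grind⟩
  | succ t ih =>
    obtain ⟨hx, hj⟩ := ih
    refine ⟨?_, fun j hj1 hjl => ?_⟩
    · rw [getD_mstate_succ hl, if_pos rfl]
      cases hc : w.getD t true
      · rw [if_neg (by simp), ne_eq, hj 1 le_rfl (by omega)]
        rintro ⟨hlt, hA⟩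
        have := hg _ hA
        rw [show t + 1 - l + (l - 1) = t by omega, hc] at this
        exact Bool.false_ne_true this
      · rw [if_pos rfl]
        revert hx
        cases (mstate l w t).getD 0 MSym.circ <;> cases (mstate l w t).getD 1 MSym.circ <;>
          simp [headA]
    · rw [getD_mstate_succ hl, if_neg (by omega)]
      by_cases hjl' : j + 1 < l
      · rw [if_pos hjl', hj (j + 1) (by omega) hjl']
        grind
      · rw [if_neg hjl', if_pos (by omega), show t + 1 + j - l = t by omega]
        cases w.getD t true
        · simp only [Bool.false_eq_true, if_false, and_false, iff_false]; exact hx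
        · simp only [if_true, and_true, true_iff]; omega

/-- `MarkAt v (some p)`: the only `×` of `v` is at position `p`; `MarkAt v none`: `v` has no `×`. -/
def MarkAt (v : List MSym) (o : Option ℕ) : Prop :=
  ∀ q, v.getD q MSym.circ = MSym.mark ↔ o = some q

/-- The mark position after arrow `c` out of a vertex starting with `x :: y`. -/
def nextMark (l : ℕ) (c : Bool) (x y : MSym) : Option ℕ → Option ℕ
  | none => none
  | some 0 => if c then (if y = MSym.circ then some 0 else none) else some (l - 1)
  | some 1 => if c then (if x = MSym.circ then some 0 else none) else some 0
  | some (p + 2) => some (p + 1)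

theorem markAt_mstate_succ (hl : 2 ≤ l) {w : List Bool} {t : ℕ} {o : Option ℕ}
    (h : MarkAt (mstate l w t) o) :
    MarkAt (mstate l w (t + 1)) (nextMark l (w.getD t true) ((mstate l w t).getD 0 MSym.circ)
      ((mstate l w t).getD 1 MSym.circ) o) := by
  have hlt : ∀ p, o = some p → p < l := fun p hp => by
    by_contra hpl
    have := (h p).mpr hp
    rw [getD_mstate_of_le hl w (by omega)] at this
    cases this
  intro q
  have h0 := h 0
  have h1 := h 1
  have hq := h (q + 1)
  rw [getD_mstate_succ hl]
  generalize (mstate l w t).getD 0 MSym.circ = x at *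
  generalize (mstate l w t).getD 1 MSym.circ = y at *
  generalize (mstate l w t).getD (q + 1) MSym.circ = z at *
  rcases Nat.lt_or_ge q 1 with hq0 | hq0
  · obtain rfl : q = 0 := by omega
    rcases o with _ | _ | _ | p <;> cases w.getD t true <;> cases x <;> cases y <;>
      simp_all [nextMark, headA] <;> omega
  rcases Nat.lt_or_ge (q + 1) l with hql | hql
  · rw [if_neg (by omega), if_pos hql, hq]
    rcases o with _ | _ | _ | p <;> cases w.getD t true <;> simp [nextMark] <;> grind
  rw [if_neg (by omega), if_neg (by omega)]
  rcases o with _ | _ | _ | p <;> cases w.getD t true <;> simp [nextMark] <;> grind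

theorem exists_markAt_mstate (hl : 2 ≤ l) (w : List Bool) (t : ℕ) :
    ∃ o, MarkAt (mstate l w t) o := by
  induction t with
  | zero =>
    refine ⟨some (l - 1), fun q => ?_⟩
    simp only [mstate, List.getD_eq_getElem?_getD]
    grind
  | succ t ih =>
    obtain ⟨o, h⟩ := ih
    exact ⟨_, markAt_mstate_succ hl h⟩

theorem markAt_zero_of_csrc (hl : 2 ≤ l) {w : List Bool} {t : ℕ} (h : CSrc l w t) :
    MarkAt (mstate l w t) (some 0) := by
  obtain ⟨o, ho⟩ := exists_markAt_mstate hl w t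
  rwa [← (ho 0).mp h.1]

theorem not_csrc_of_markAt {w : List Bool} {t : ℕ} {o : Option ℕ}
    (h : MarkAt (mstate l w t) o) (ho : o ≠ some 0) : ¬ CSrc l w t :=
  fun hc => ho ((h 0).mp hc.1)

theorem not_csrc_of_markAt_none (hl : 2 ≤ l) {w : List Bool} {n t : ℕ}
    (h : MarkAt (mstate l w n) none) (hnt : n ≤ t) : ¬ CSrc l w t := by
  refine not_csrc_of_markAt (o := none) ?_ (by simp)
  induction t, hnt using Nat.le_induction with
  | base => exact h
  | succ t _ ih => exact markAt_mstate_succ hl ih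

theorem not_csrc_of_csrc_of_getD_true (hl : 2 ≤ l) {w : List Bool} {n : ℕ}
    (hcs : CSrc l w n) (hA : w.getD n true = true) {t : ℕ} (hnt : n < t) : ¬ CSrc l w t := by
  have h := markAt_mstate_succ hl (markAt_zero_of_csrc hl hcs)
  rw [hA, hcs.2] at h
  exact not_csrc_of_markAt_none hl h hnt

theorem markAt_of_csrc_of_getD_false (hl : 2 ≤ l) {w : List Bool} {n : ℕ}
    (hcs : CSrc l w n) (hB : w.getD n true = false) {s : ℕ} (hs : s ≤ l - 2) :
    MarkAt (mstate l w (n + 1 + s)) (some (l - 1 - s)) := by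
  induction s with
  | zero =>
    have h := markAt_mstate_succ hl (markAt_zero_of_csrc hl hcs)
    rwa [hB] at h
  | succ s ih =>
    obtain ⟨p, hp⟩ : ∃ p, l - 1 - s = p + 2 := ⟨l - 3 - s, by omega⟩
    have h := markAt_mstate_succ hl (hp ▸ ih (by omega))
    rwa [show l - 1 - (s + 1) = p + 1 by omega]

/-- Without a `×•` at time `T`, a mark at position 0 forces `∘` at position 1, i.e. an `A`-arrow
at time `T + 1 - l`; goodness then makes arrow `T` an `A`-arrow, which keeps the mark in place. -/
theorem csrc_or_markAt_zero_succ (hl : 2 ≤ l) {w : List Bool} (hg : GoodWord l w) {T : ℕ}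
    (h : MarkAt (mstate l w T) (some 0)) (hT : l ≤ T + 1) :
    CSrc l w T ∨
      w.getD (T + 1 - l) true = true ∧ MarkAt (mstate l w (T + 1)) (some 0) := by
  by_cases hcs : CSrc l w T
  · exact Or.inl hcs
  have hcirc : (mstate l w T).getD 1 MSym.circ = MSym.circ := by
    cases hy : (mstate l w T).getD 1 MSym.circ
    · exact absurd ⟨(h 0).mpr rfl, hy⟩ hcs
    · rfl
    · exact absurd ((h 1).mp hy) (by simp)
  have hA := (((getD_mstate_eq_circ hl hg T).2 1 le_rfl (by omega)).mp hcirc).2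
  have hT' := goodWord_iff.mp hg _ hA
  rw [show T + 1 - l + (l - 1) = T by omega] at hT'
  have h' := markAt_mstate_succ hl h
  rw [hT', hcirc] at h'
  exact Or.inr ⟨hA, h'⟩

theorem exists_csrc_of_markAt_zero (hl : 2 ≤ l) {w : List Bool} (hg : GoodWord l w) {T : ℕ}
    (h : MarkAt (mstate l w T) (some 0)) (hT : l ≤ T + 1) {k : ℕ}
    (hB : w.getD (T + 1 - l + k) true = false) : ∃ t, T ≤ t ∧ CSrc l w t := by
  induction k generalizing T with
  | zero =>
    rcases csrc_or_markAt_zero_succ hl hg h hT with hcs | ⟨hA, -⟩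
    · exact ⟨T, le_rfl, hcs⟩
    · rw [Nat.add_zero, hA] at hB
      exact Bool.noConfusion hB
  | succ k ih =>
    rcases csrc_or_markAt_zero_succ hl hg h hT with hcs | ⟨-, h'⟩
    · exact ⟨T, le_rfl, hcs⟩
    · rw [show T + 1 - l + (k + 1) = T + 1 + 1 - l + k by omega] at hB
      obtain ⟨t, ht, hcs⟩ := ih h' (by omega) hB
      exact ⟨t, by omega, hcs⟩

theorem forall_not_csrc_iff (hl : 2 ≤ l) {w : List Bool} (hg : GoodWord l w) {n : ℕ}
    (hcs : CSrc l w n) (hB : w.getD n true = false) :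
    (∀ t, n < t → ¬ CSrc l w t) ↔ w.getD (n + (l - 1)) true = true := by
  have h1 : MarkAt (mstate l w (n + (l - 1))) (some 1) := by
    have h := markAt_of_csrc_of_getD_false hl hcs hB (s := l - 2) le_rfl
    rwa [show n + 1 + (l - 2) = n + (l - 1) by omega, show l - 1 - (l - 2) = 1 by omega] at h
  have h' := markAt_mstate_succ hl h1
  constructor
  · intro hno
    by_contra hlast
    rw [Bool.not_eq_true] at hlast
    rw [hlast] at h'
    have hB' : w.getD (n + (l - 1) + 1 + 1 - l + (l - 2)) true = false := by
      rwa [show n + (l - 1) + 1 + 1 - l + (l - 2) = n + (l - 1) by omega]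
    obtain ⟨t, ht, hcs'⟩ := exists_csrc_of_markAt_zero hl hg h' (by omega) hB'
    exact hno t (by omega) hcs'
  · intro hlast t ht hcs'
    by_cases htl : t < n + l
    · have h := markAt_of_csrc_of_getD_false hl hcs hB (s := t - (n + 1)) (by omega)
      rw [show n + 1 + (t - (n + 1)) = t by omega] at h
      exact not_csrc_of_markAt h (by simp; omega) hcs'
    · have hx : (mstate l w (n + (l - 1))).getD 0 MSym.circ = MSym.dot := by
        have hne := (getD_mstate_eq_circ hl hg (n + (l - 1))).1
        cases hx : (mstate l w (n + (l - 1))).getD 0 MSym.circ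
        · rfl
        · exact absurd hx hne
        · exact absurd ((h1 0).mp hx) (by simp)
      rw [hlast, hx] at h'
      exact not_csrc_of_markAt_none hl h' (by omega) hcs'

def IsCancelIdx (l : ℕ) (w : List Bool) (n : ℕ) : Prop :=
  CSrc l w n ∧ ∀ t, n < t → ¬ CSrc l w t

theorem getD_eq_false_of_csrc (hl : 2 ≤ l) {w : List Bool} (hg : GoodWord l w) {n : ℕ}
    (hcs : CSrc l w n) {i : ℕ} (hi : i + (l - 1) = n) : w.getD i true = false := by
  by_contra hA
  rw [Bool.not_eq_false] at hA
  have h := ((getD_mstate_eq_circ hl hg n).2 1 le_rfl (by omega)).mpr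
    ⟨by omega, by rwa [show n + 1 - l = i by omega]⟩
  rw [hcs.2] at h
  cases h

theorem goodWord_of_update {w w' : List Bool} {n : ℕ} (hg : GoodWord l w)
    (hoff : ∀ i ≠ n, w'.getD i true = w.getD i true)
    (hnext : w'.getD n true = true → w'.getD (n + (l - 1)) true = true)
    (hprev : ∀ i, i + (l - 1) = n → w.getD i true = false) : GoodWord l w' := by
  rw [goodWord_iff] at hg ⊢
  intro i hi
  by_cases hin : i = n
  · exact hin ▸ hnext (hin ▸ hi)
  rw [hoff i hin] at hi
  by_cases hin' : i + (l - 1) = n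
  · rw [hprev i hin'] at hi
    cases hi
  · rw [hoff _ hin']
    exact hg i hi

theorem mstate_congr {w w' : List Bool} {t : ℕ} (h : ∀ i < t, w'.getD i true = w.getD i true) :
    mstate l w' t = mstate l w t := by
  induction t with
  | zero => rfl
  | succ t ih =>
    rw [mstate_succ, mstate_succ, h t (by omega), ih fun i hi => h i (by omega)]

theorem goodWord_and_isCancelIdx_iff (hl : 2 ≤ l) {w w' : List Bool} {n : ℕ}
    (hA : w.getD n true = true) (hB : w'.getD n true = false)
    (hoff : ∀ i ≠ n, w'.getD i true = w.getD i true) :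
    GoodWord l w ∧ IsCancelIdx l w n ↔ GoodWord l w' ∧ IsCancelIdx l w' n := by
  have hcs : CSrc l w' n ↔ CSrc l w n := by
    rw [CSrc, CSrc, mstate_congr fun i hi => hoff i (by omega)]
  have hlast : w'.getD (n + (l - 1)) true = w.getD (n + (l - 1)) true := hoff _ (by omega)
  constructor
  · rintro ⟨hg, hcsw, -⟩
    have hg' := goodWord_of_update hg hoff (fun h => absurd (hB ▸ h) (by simp))
      fun i hi => getD_eq_false_of_csrc hl hg hcsw hi
    have hcs' := hcs.mpr hcsw
    exact ⟨hg', hcs', (forall_not_csrc_iff hl hg' hcs' hB).mpr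
      (hlast.trans (goodWord_iff.mp hg n hA))⟩
  · rintro ⟨hg', hcs', hno⟩
    have hg := goodWord_of_update hg' (fun i hi => (hoff i hi).symm)
      (fun _ => hlast.symm.trans ((forall_not_csrc_iff hl hg' hcs' hB).mp hno))
      fun i hi => getD_eq_false_of_csrc hl hg' hcs' hi
    have hcsw := hcs.mp hcs'
    exact ⟨hg, hcsw, fun t ht => not_csrc_of_csrc_of_getD_true hl hcsw hA ht⟩

theorem getD_append_cons_of_ne (N K : List Bool) (c c' : Bool) {i : ℕ} (hi : i ≠ N.length) :
    (N ++ c :: K).getD i true = (N ++ c' :: K).getD i true := by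
  simp only [List.getD_eq_getElem?_getD, List.getElem?_append]
  grind

theorem cancelIdx_eq {w : List Bool} {n : ℕ} (h : IsCancelIdx l w n) : cancelIdx l w = n := by
  refine le_antisymm (Nat.sInf_le h) (le_csInf ⟨n, h⟩ fun t ht => ?_)
  by_contra hlt
  exact ht.2 n (by omega) h.1

theorem getD_flipCancel (w : List Bool) (i : ℕ) :
    (flipCancel l w).getD i true = if i = cancelIdx l w then false else w.getD i true := by
  simp only [flipCancel, List.getD_eq_getElem?_getD, List.getElem?_set, List.getElem?_append,
    List.getElem?_replicate]
  grind

theorem reduced_flipCancel {w : List Bool} (hw : Reduced w) : Reduced (flipCancel l w) := by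
  right
  rcases hw with rfl | hw
  · simp [flipCancel, List.getLast?_eq_getElem?]
  · rw [List.getLast?_eq_getElem?] at hw ⊢
    simp only [flipCancel, List.length_set, List.length_append, List.length_replicate,
      List.getElem?_set, List.getElem?_append, List.getElem?_replicate]
    grind

theorem eq_of_reduced_of_getD {w₁ w₂ : List Bool} (h₁ : Reduced w₁) (h₂ : Reduced w₂)
    (h : ∀ i, w₁.getD i true = w₂.getD i true) : w₁ = w₂ := by
  have hlen : ∀ {u v : List Bool}, Reduced u → (∀ i, u.getD i true = v.getD i true) →
      u.length ≤ v.length := by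
    rintro u v (rfl | hu) huv
    · simp
    by_contra hlt
    have := huv (u.length - 1)
    rw [List.getLast?_eq_getElem?] at hu
    simp only [List.getD_eq_getElem?_getD, hu] at this
    grind
  have e := le_antisymm (hlen h₁ h) (hlen h₂ fun i => (h i).symm)
  refine List.ext_getElem? fun i => ?_
  have := h i
  simp only [List.getD_eq_getElem?_getD] at this
  grind

theorem exists_reduced_getD_eq (L : List Bool) :
    ∃ w, Reduced w ∧ ∀ i, w.getD i true = L.getD i true := by
  induction L with
  | nil => exact ⟨[], Or.inl rfl, fun _ => rfl⟩
  | cons c L ih =>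
    obtain ⟨w, hw, hwL⟩ := ih
    by_cases h : c = true ∧ w = []
    · obtain ⟨rfl, rfl⟩ := h
      refine ⟨[], Or.inl rfl, fun i => ?_⟩
      cases i with
      | zero => rfl
      | succ i => exact hwL i
    · refine ⟨c :: w, Or.inr ?_, fun i => ?_⟩
      · rcases hw with rfl | hw
        · cases c <;> simp_all
        · simp [List.getLast?_cons, hw]
      · cases i with
        | zero => rfl
        | succ i => exact hwL i

theorem getD_eq_flipCancel {w : List Bool} (h : HasCA l w) (i : ℕ) :
    w.getD i true = if i = cancelIdx l w then true else (flipCancel l w).getD i true := by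
  obtain ⟨-, n, hA, hc⟩ := h
  rw [getD_flipCancel, cancelIdx_eq hc]
  split_ifs with hi
  · rw [hi, hA]
  · rfl

theorem hasCB_flipCancel (hl : 2 ≤ l) {w : List Bool} (h : HasCA l w) :
    HasCB l (flipCancel l w) ∧ cancelIdx l (flipCancel l w) = cancelIdx l w := by
  obtain ⟨hg, n, hA, hc⟩ := h
  have hflip : ∀ i, (flipCancel l w).getD i true = if i = n then false else w.getD i true := by
    rw [← cancelIdx_eq hc]
    exact getD_flipCancel w
  have hB : (flipCancel l w).getD n true = false := by rw [hflip, if_pos rfl]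
  obtain ⟨hg', hc'⟩ := (goodWord_and_isCancelIdx_iff hl hA hB
    fun i hi => by rw [hflip, if_neg hi]).mp ⟨hg, hc⟩
  exact ⟨⟨hg', n, hB, hc'⟩, (cancelIdx_eq hc').trans (cancelIdx_eq hc).symm⟩

theorem eq_of_flipCancel_eq (hl : 2 ≤ l) {w₁ w₂ : List Bool} (hr₁ : Reduced w₁) (h₁ : HasCA l w₁)
    (hr₂ : Reduced w₂) (h₂ : HasCA l w₂) (h : flipCancel l w₁ = flipCancel l w₂) : w₁ = w₂ := by
  have hn : cancelIdx l w₁ = cancelIdx l w₂ := by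
    rw [← (hasCB_flipCancel hl h₁).2, h, (hasCB_flipCancel hl h₂).2]
  refine eq_of_reduced_of_getD hr₁ hr₂ fun i => ?_
  rw [getD_eq_flipCancel h₁, getD_eq_flipCancel h₂, hn, h]

theorem exists_flipCancel_eq (hl : 2 ≤ l) {u : List Bool} (hr : Reduced u) (h : HasCB l u) :
    ∃ w, (Reduced w ∧ HasCA l w) ∧ flipCancel l w = u := by
  obtain ⟨hg', n, hB, hc'⟩ := h
  have hn : n < u.length := by
    by_contra hn
    rw [List.getD_eq_default _ _ (by omega)] at hB
    cases hB
  obtain ⟨w, hrw, hw⟩ := exists_reduced_getD_eq (u.set n true)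
  have hw' : ∀ i, w.getD i true = if i = n then true else u.getD i true := fun i => by
    simp only [hw, List.getD_eq_getElem?_getD, List.getElem?_set]
    grind
  have hA : w.getD n true = true := by rw [hw', if_pos rfl]
  obtain ⟨hg, hc⟩ := (goodWord_and_isCancelIdx_iff hl hA hB
    fun i hi => by rw [hw', if_neg hi]).mpr ⟨hg', hc'⟩
  refine ⟨w, ⟨hrw, hg, n, hA, hc⟩,
    eq_of_reduced_of_getD (reduced_flipCancel hrw) hr fun i => ?_⟩
  rw [getD_flipCancel, cancelIdx_eq hc, hw']
  split_ifs with hi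
  · rw [hi, hB]
  · rfl

end MarkedPath

/-- For `M = NAK ∈ 𝒢_A` (the displayed `A` being the cancellation `A`-arrow),
the monomial `NBK` is good and the displayed `B` is its cancellation `B`-arrow;
moreover the map `NAK ↦ NBK` (flipping the cancellation arrow) is a bijection
from `𝒢_A` onto `𝒢_B`. -/
theorem stmt13 (l : ℕ) (hl : 2 ≤ l) :
    (∀ N K : List Bool, CancelPair l N K →
      GoodWord l (N ++ false :: K) ∧ CSrc l (N ++ false :: K) N.length ∧
        ∀ t, N.length < t → ¬ CSrc l (N ++ false :: K) t) ∧
    ∃ φ : {w : List Bool // Reduced w ∧ HasCA l w} →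
          {w : List Bool // Reduced w ∧ HasCB l w},
      (∀ w, (φ w).val = flipCancel l w.val) ∧ Function.Bijective φ := by
  refine ⟨fun N K h => (goodWord_and_isCancelIdx_iff hl (by simp) (by simp)
    fun i hi => getD_append_cons_of_ne N K false true hi).mp h, ?_⟩
  refine ⟨fun w => ⟨flipCancel l w.1, reduced_flipCancel w.2.1, (hasCB_flipCancel hl w.2.2).1⟩,
    fun _ => rfl, fun w₁ w₂ h => ?_, fun u => ?_⟩
  · exact Subtype.ext (eq_of_flipCancel_eq hl w₁.2.1 w₁.2.2 w₂.2.1 w₂.2.2 (congrArg Subtype.val h))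
  · obtain ⟨w, hw, hwu⟩ := exists_flipCancel_eq hl u.2.1 u.2.2
    exact ⟨⟨w, hw⟩, Subtype.ext hwu⟩
end

section
/- Let (NAK, NBK) be a cancellation pair. Then the extremal configurations of the monomials ANAK and ANBK are identical. -/
open Finset Filter MvPowerSeries

/-!
Write `f_p = b_p - b_{p-1}` (with `b_{-1} = 0`, so `f_{l-1} = k - b_{l-2}`). In this basis `M_b`
is the cyclic shift and `M_a` shifts while merging the first two entries and putting `0` last;
this is exactly how the marked path moves its symbols. Hence, by induction along the path,
`M_{c_1} ∘ ⋯ ∘ M_{c_t}` sends `f_p` to `0` where the `t`-th vertex has `∘` at position `p`,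
and to `k - b_{l-2}` where it has `×`. At the cancellation arrow `×` stands in front, so `N`
maps `b_0` to `k - b_{l-2}` and `AN` maps `b_0` to `0`. As `M_b v - M_a v` is a multiple of
`b_0`, swapping the displayed `A` for `B` changes no entry of the extremal configuration.
-/

section

variable {l : ℕ}

lemma Ma_add (u v : ℕ → ℤ) : Ma l (u + v) = Ma l u + Ma l v := by
  funext j
  simp only [Ma, Pi.add_apply]
  split_ifs <;> ring

lemma Mb_add (u v : ℕ → ℤ) : Mb l (u + v) = Mb l u + Mb l v := by
  funext j
  simp only [Mb, Pi.add_apply, Finset.sum_add_distrib]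
  split_ifs <;> ring

lemma applyWord_cons (c : Bool) (w : List Bool) (v : ℕ → ℤ) :
    applyWord l (c :: w) v = if c then Ma l (applyWord l w v) else Mb l (applyWord l w v) :=
  rfl

lemma applyWord_append (u w : List Bool) (v : ℕ → ℤ) :
    applyWord l (u ++ w) v = applyWord l u (applyWord l w v) := by
  simp [applyWord, List.foldr_append]

lemma applyWord_add (w : List Bool) (u v : ℕ → ℤ) :
    applyWord l w (u + v) = applyWord l w u + applyWord l w v := by
  induction w with
  | nil => rfl
  | cons c w ih => cases c <;> simp [applyWord_cons, ih, Ma_add, Mb_add]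

def applyWordHom (l : ℕ) (w : List Bool) : (ℕ → ℤ) →+ (ℕ → ℤ) :=
  AddMonoidHom.mk' (applyWord l w) (applyWord_add w)

@[simp]
lemma applyWordHom_apply (w : List Bool) (v : ℕ → ℤ) : applyWordHom l w v = applyWord l w v :=
  rfl

lemma applyWord_take_succ {w : List Bool} {t : ℕ} (ht : t < w.length) (v : ℕ → ℤ) :
    applyWord l (w.take (t + 1)) v =
      applyWord l (w.take t) (if w.getD t true then Ma l v else Mb l v) := by
  rw [List.take_add_one, List.getElem?_eq_getElem ht, Option.toList_some, applyWord_append,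
    List.getD_eq_getElem _ _ ht]
  rfl

lemma Mb_eq_Ma_add (v : ℕ → ℤ) : Mb l v = Ma l v + Mb l v 0 • Pi.single 0 1 := by
  funext j
  rcases eq_or_ne j 0 with rfl | hj
  · simp [Ma]
  · simp only [Mb, Ma, Pi.add_apply, Pi.smul_apply, Pi.single_apply, if_neg hj]
    simp


/-- `bDiff p = b_p - b_{p-1}` with `b_{-1} = 0`; `bDiff (l - 1) = k - b_{l-2}`. -/
def bDiff : ℕ → ℕ → ℤ
  | 0 => Pi.single 0 1
  | p + 1 => Pi.single (p + 1) 1 - Pi.single p 1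


lemma Ma_bDiff_zero (hl : 2 ≤ l) : Ma l (bDiff 0) = bDiff 0 + bDiff 1 := by
  funext j
  simp only [Ma, bDiff, Pi.add_apply, Pi.sub_apply, Pi.single_apply]
  split_ifs <;> omega

lemma Ma_bDiff_of_lt {p : ℕ} (hp : 0 < p) (hpl : p + 1 < l) :
    Ma l (bDiff p) = bDiff (p + 1) := by
  obtain ⟨p, rfl⟩ := Nat.exists_eq_add_of_lt hp
  funext j
  simp only [Ma, bDiff, Pi.sub_apply, Pi.single_apply]
  split_ifs <;> omega

lemma Ma_bDiff_last (hl : 2 ≤ l) : Ma l (bDiff (l - 1)) = 0 := by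
  obtain ⟨m, rfl⟩ : ∃ m, l = m + 2 := ⟨l - 2, by omega⟩
  show Ma (m + 2) (bDiff (m + 1)) = 0
  funext j
  simp only [bDiff, Ma, Pi.sub_apply, Pi.single_apply, Pi.zero_apply]
  split_ifs <;> omega

lemma Mb_bDiff_of_lt {p : ℕ} (hpl : p + 1 < l) : Mb l (bDiff p) = bDiff (p + 1) := by
  funext j
  cases p with
  | zero =>
    simp only [Mb, bDiff, Finset.sum_pi_single', Finset.mem_range]
    simp only [Pi.sub_apply, Pi.single_apply]
    split_ifs <;> omega
  | succ p =>
    simp only [Mb, bDiff, Pi.sub_apply, Finset.sum_sub_distrib, Finset.sum_pi_single',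
      Finset.mem_range]
    simp only [Pi.single_apply]
    split_ifs <;> omega

lemma Mb_bDiff_last (hl : 2 ≤ l) : Mb l (bDiff (l - 1)) = bDiff 0 := by
  obtain ⟨m, rfl⟩ : ∃ m, l = m + 2 := ⟨l - 2, by omega⟩
  show Mb (m + 2) (bDiff (m + 1)) = bDiff 0
  funext j
  simp only [Mb, bDiff, Pi.sub_apply, Finset.sum_sub_distrib, Finset.sum_pi_single',
    Finset.mem_range]
  simp only [Pi.single_apply]
  split_ifs <;> omega


/-- Mirror of `stepA` on the values attached to the positions of a vertex. -/
def diffStepA {M : Type*} [Add M] [Zero M] : List M → List M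
  | d₀ :: d₁ :: D => (d₀ + d₁) :: (D ++ [0])
  | D => D

lemma diffStepA_map {M N : Type*} [AddZeroClass M] [AddZeroClass N] (f : M →+ N) (D : List M) :
    diffStepA (D.map f) = (diffStepA D).map f := by
  match D with
  | d₀ :: d₁ :: D => simp [diffStepA]
  | [] | [_] => rfl

def MSym.Describes (l : ℕ) : MSym → (ℕ → ℤ) → Prop
  | .dot, _ => True
  | .circ, d => d = 0
  | .mark, d => d = bDiff (l - 1)

lemma stepB_eq_rotate (s : List MSym) : stepB s = s.rotate 1 := by
  cases s <;> simp [stepB]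

lemma List.Forall₂.rotate_one {α β : Type*} {R : α → β → Prop} {s : List α} {D : List β}
    (h : List.Forall₂ R s D) : List.Forall₂ R (s.rotate 1) (D.rotate 1) := by
  cases h with
  | nil => exact .nil
  | cons hx hs => simpa using List.rel_append hs (.cons hx .nil)

lemma forall₂_describes_stepA {s : List MSym} {D : List (ℕ → ℤ)}
    (h : List.Forall₂ (MSym.Describes l) s D) :
    List.Forall₂ (MSym.Describes l) (stepA s) (diffStepA D) :=
  match s, D, h with
  | [], [], .nil => .nil
  | [x], [_], .cons hx .nil => by cases x <;> exact .cons hx .nil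
  | x :: y :: s, _ :: _ :: D, .cons hx (.cons hy hs) =>
    have hs' : List.Forall₂ (MSym.Describes l) (s ++ [.circ]) (D ++ [0]) :=
      List.rel_append hs (.cons rfl .nil)
    by cases x <;> [skip; skip; cases y] <;> simp_all [stepA, diffStepA, MSym.Describes]


lemma map_Mb_bDiff (hl : 2 ≤ l) :
    (List.range l).map (fun p => Mb l (bDiff p)) = ((List.range l).map bDiff).rotate 1 := by
  apply List.ext_getElem (by simp)
  intro n h₁ h₂
  simp only [List.getElem_rotate, List.getElem_map, List.getElem_range, List.length_map,
    List.length_range]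
  simp only [List.length_map, List.length_range] at h₁
  rcases Nat.lt_or_ge (n + 1) l with hn | hn
  · rw [Nat.mod_eq_of_lt hn, Mb_bDiff_of_lt hn]
  · obtain rfl : n = l - 1 := by omega
    rw [Nat.sub_add_cancel (by omega), Nat.mod_self, Mb_bDiff_last hl]

lemma map_Ma_bDiff (hl : 2 ≤ l) :
    (List.range l).map (fun p => Ma l (bDiff p)) = diffStepA ((List.range l).map bDiff) := by
  obtain ⟨m, rfl⟩ : ∃ m, l = m + 2 := ⟨l - 2, by omega⟩
  conv_lhs => rw [List.range_succ_eq_map, List.range_succ]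
  conv_rhs => rw [List.range_succ_eq_map, List.range_succ_eq_map]
  have hlast : Ma (m + 2) (bDiff (m + 1)) = 0 := Ma_bDiff_last hl
  simp only [List.map_cons, List.map_append, List.map_map, diffStepA, Ma_bDiff_zero hl, hlast]
  refine congrArg₂ _ rfl (congrArg₂ _ (List.map_congr_left fun p hp => ?_) rfl)
  exact Ma_bDiff_of_lt p.succ_pos (by simp at hp; omega)


def pathDiffs (l : ℕ) (w : List Bool) (t : ℕ) : List (ℕ → ℤ) :=
  (List.range l).map fun p => applyWord l (w.take t) (bDiff p)


lemma pathDiffs_zero (w : List Bool) : pathDiffs l w 0 = (List.range l).map bDiff := by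
  simp only [pathDiffs, List.take_zero]
  rfl

lemma pathDiffs_succ (hl : 2 ≤ l) {w : List Bool} {t : ℕ} (ht : t < w.length) :
    pathDiffs l w (t + 1) =
      if w.getD t true then diffStepA (pathDiffs l w t) else (pathDiffs l w t).rotate 1 := by
  have hmap : ∀ M : (ℕ → ℤ) → ℕ → ℤ,
      ((List.range l).map fun p => M (bDiff p)).map (applyWordHom l (w.take t)) =
        (List.range l).map fun p => applyWord l (w.take t) (M (bDiff p)) :=
    fun M => by simp [Function.comp_def]
  simp only [pathDiffs, applyWord_take_succ ht]
  cases w.getD t true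
  · simp only [Bool.false_eq_true, if_false]
    rw [← hmap (Mb l), map_Mb_bDiff hl, List.map_rotate, List.map_map]
    rfl
  · simp only [if_true]
    rw [← hmap (Ma l), map_Ma_bDiff hl, ← diffStepA_map, List.map_map]
    rfl

lemma forall₂_describes_initial (hl : 1 ≤ l) :
    List.Forall₂ (MSym.Describes l) (List.replicate (l - 1) .dot ++ [.mark])
      ((List.range l).map bDiff) := by
  obtain ⟨m, rfl⟩ := Nat.exists_eq_add_of_le' hl
  rw [List.range_succ, List.map_append]
  exact List.rel_append (List.forall₂_iff_get.2 ⟨by simp, fun _ _ _ => by simp [MSym.Describes]⟩)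
    (.cons rfl .nil)

theorem forall₂_mstate_pathDiffs (hl : 2 ≤ l) (w : List Bool) {t : ℕ} (ht : t ≤ w.length) :
    List.Forall₂ (MSym.Describes l) (mstate l w t) (pathDiffs l w t) := by
  induction t with
  | zero => rw [pathDiffs_zero]; exact forall₂_describes_initial (by omega)
  | succ t ih =>
    rw [pathDiffs_succ hl ht, mstate]
    cases w.getD t true
    · simpa [stepB_eq_rotate] using (ih (by omega)).rotate_one
    · exact forall₂_describes_stepA (ih (by omega))



theorem applyWord_take_eq_of_mark (hl : 2 ≤ l) {w : List Bool} {t : ℕ} (ht : t ≤ w.length)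
    (hmark : (mstate l w t).getD 0 .circ = .mark) :
    applyWord l (w.take t) (Pi.single 0 1) = bDiff (l - 1) := by
  have hsim := forall₂_mstate_pathDiffs hl w ht
  obtain ⟨m, rfl⟩ := Nat.exists_eq_add_of_le' (show 1 ≤ l by omega)
  rw [pathDiffs, List.range_succ_eq_map, List.map_cons] at hsim
  obtain ⟨x, s, hx, -, hs⟩ := List.forall₂_cons_right_iff.1 hsim
  rw [hs] at hmark
  obtain rfl : x = .mark := hmark
  exact hx

lemma applyWord_Mb_eq_Ma {u : List Bool} (hu : applyWord l u (Pi.single 0 1) = 0)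
    (v : ℕ → ℤ) : applyWord l u (Mb l v) = applyWord l u (Ma l v) := by
  rw [Mb_eq_Ma_add, applyWord_add, ← applyWordHom_apply (v := _ • _), map_zsmul,
    applyWordHom_apply, hu, smul_zero, add_zero]

lemma iotaL_two_one (hl : 2 ≤ l) : iotaL l 2 1 = Pi.single 0 1 := by
  have h1 : ibar l 1 = 1 := by simp [ibar]
  have h2 : ibar l 2 = 2 := by
    unfold ibar
    rw [show (2 : ℤ) - 1 = 1 by norm_num, Int.emod_eq_of_lt zero_le_one (by omega)]
    rfl
  funext t
  simp only [iotaL, h1, h2, Pi.single_apply]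
  split_ifs <;> omega

theorem xconf_append_true_eq_false (hl : 2 ≤ l) {u : List Bool}
    (hu : applyWord l u (Pi.single 0 1) = 0) (K : List Bool) (i : ℕ) :
    xconf l (u ++ true :: K) i = xconf l (u ++ false :: K) i := by
  simp only [xconf, iotaL_two_one hl]
  rcases lt_trichotomy i u.length with hi | rfl | hi
  · rw [List.getD_append _ _ _ _ hi, List.getD_append _ _ _ _ hi,
      List.take_append_of_le_length hi.le, List.take_append_of_le_length hi.le]
  · rw [List.getD_append_right _ _ _ _ le_rfl, List.getD_append_right _ _ _ _ le_rfl,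
      List.take_left' rfl]
    simp [hu]
  · obtain ⟨j, rfl⟩ := Nat.exists_eq_add_of_lt hi
    have hlen : u.length ≤ u.length + j + 1 := by omega
    simp only [List.getD_append_right _ _ _ _ hlen, List.take_append, List.take_of_length_le hlen,
      show u.length + j + 1 - u.length = j + 1 by omega, List.getD_cons_succ, List.take_succ_cons,
      applyWord_append, applyWord_cons, if_true, Bool.false_eq_true, if_false,
      applyWord_Mb_eq_Ma hu]


end

/-- For a cancellation pair `(NAK, NBK)`, the extremal configurations of the
monomials `ANAK` and `ANBK` are identical. -/
theorem stmt15 (l : ℕ) (hl : 2 ≤ l) (N K : List Bool) (h : CancelPair l N K) :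
    ∀ i, xconf l (true :: (N ++ true :: K)) i = xconf l (true :: (N ++ false :: K)) i := by
  obtain ⟨-, ⟨hmark, -⟩, -⟩ := h
  have hN : applyWord l N (Pi.single 0 1) = bDiff (l - 1) := by
    simpa using applyWord_take_eq_of_mark hl (w := N ++ true :: K) (by simp) hmark
  have hAN : applyWord l (true :: N) (Pi.single 0 1) = 0 := by
    rw [applyWord_cons, if_pos rfl, hN, Ma_bDiff_last hl]
  exact xconf_append_true_eq_false hl hAN K
end

section
/- For any simple vector v, write A v = f·[P_1, ..., P_l] and B v = f'·[P'_1, ..., P'_l]. Then P_1 = P_2, P_j = P'_j for all 2 ≤ j ≤ l, and f/f' = −P'_2/P'_1. -/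
open Finset Filter MvPowerSeries

/-! The first two claims are read off the definitions of the tuples. The third is the identity
`x/(1 - x/y) = -y/(1 - y/x)` for monomials `x, y`: writing `x = y·u`, the left side is
`y·u·(1 - u)⁻¹`, and the right side is `-y` times the expansion of `(1 - u⁻¹)⁻¹` in negative
powers of `u`, namely `-u·(1 - u)⁻¹`. When `x/y` has exponents of opposite signs, both expansions
are `0` by the convention of `geomPS`, and so is the expansion of `1/(1 - 1)`. -/

lemma ncard_eq_zero_of_forall_notMem {α : Type*} {s : Set α} (h : ∀ x, x ∉ s) :
    s.ncard = 0 := by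
  rw [Set.eq_empty_of_forall_notMem h, Set.ncard_empty]

lemma monoPS_eq_monomial (p : ℕ × ℕ) : monoPS p = MvPowerSeries.monomial (idx2 p.1 p.2) 1 := by
  simp [monoPS, Qv, Zv, idx2, X_pow_eq, monomial_mul_monomial]

lemma monoPS_add (p p' : ℕ × ℕ) : monoPS (p + p') = monoPS p * monoPS p' := by
  simp only [monoPS, Prod.fst_add, Prod.snd_add, pow_add]
  ring

@[simp] lemma idx2_apply_zero (a c : ℕ) : idx2 a c 0 = a := by simp [idx2]

@[simp] lemma idx2_apply_one (a c : ℕ) : idx2 a c 1 = c := by simp [idx2]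

lemma idx2_le_iff (a c : ℕ) (e : Fin 2 →₀ ℕ) : idx2 a c ≤ e ↔ a ≤ e 0 ∧ c ≤ e 1 := by
  simp [Finsupp.le_def, Fin.forall_fin_two]

lemma coeff_geomPS_natCast (a b : ℕ) (e : Fin 2 →₀ ℕ) :
    coeff e (geomPS (a, b)) = ({n : ℕ | n * a = e 0 ∧ n * b = e 1}.ncard : ℂ) := by
  rw [geomPS, if_pos ⟨Nat.cast_nonneg a, Nat.cast_nonneg b⟩]
  change ((Set.ncard _ : ℕ) : ℂ) = _
  dsimp only
  norm_cast

lemma coeff_geomPS_neg_natCast (a b : ℕ) (hab : a ≠ 0 ∨ b ≠ 0) (e : Fin 2 →₀ ℕ) :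
    coeff e (geomPS (-a, -b)) = -({n : ℕ | 0 < n ∧ n * a = e 0 ∧ n * b = e 1}.ncard : ℂ) := by
  rw [geomPS, if_neg (by omega)]
  change -((Set.ncard _ : ℕ) : ℂ) = _
  simp only [mul_neg, neg_inj]
  norm_cast

lemma geomPS_zero : geomPS (0, 0) = 0 := by
  ext e
  rw [map_zero, ← Nat.cast_zero, coeff_geomPS_natCast]
  by_cases he : 0 = e 0 ∧ 0 = e 1
  · rw [← he.1, ← he.2]
    simp
  · simp [he]

lemma geomPS_neg_natCast (a b : ℕ) :
    geomPS (-a, -b) = -(monoPS (a, b) * geomPS (a, b)) := by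
  by_cases hab : a = 0 ∧ b = 0
  · obtain ⟨rfl, rfl⟩ := hab
    simp [geomPS_zero]
  ext e
  rw [coeff_geomPS_neg_natCast a b (by omega), map_neg, monoPS_eq_monomial,
    coeff_monomial_mul, one_mul, neg_inj]
  split_ifs with hle
  · rw [idx2_le_iff] at hle
    have hshift : {n : ℕ | 0 < n ∧ n * a = e 0 ∧ n * b = e 1} =
        (· + 1) '' {n : ℕ | n * a = e 0 - a ∧ n * b = e 1 - b} := by
      ext n
      simp only [Set.mem_ofPred_eq, Set.mem_image]
      constructor
      · rintro ⟨hn, ha, hb⟩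
        obtain ⟨m, rfl⟩ := Nat.exists_eq_add_of_lt hn
        refine ⟨m, ?_, by omega⟩
        simp only [zero_add, add_mul, one_mul] at ha hb
        omega
      · rintro ⟨m, ⟨ha, hb⟩, rfl⟩
        simp only [add_mul, one_mul]
        omega
    rw [coeff_geomPS_natCast, hshift, Set.ncard_image_of_injective _ (add_left_injective 1)]
    simp
  · rw [idx2_le_iff] at hle
    norm_cast
    refine ncard_eq_zero_of_forall_notMem ?_
    rintro n ⟨hn, ha, hb⟩
    exact hle ⟨ha ▸ Nat.le_mul_of_pos_left a hn, hb ▸ Nat.le_mul_of_pos_left b hn⟩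

lemma geomPS_eq_zero_of_mul_neg (w : ℤ × ℤ) (hw : w.1 * w.2 < 0) : geomPS w = 0 := by
  ext e
  rw [geomPS, if_neg fun h => (mul_nonneg h.1 h.2).not_gt hw]
  change -((Set.ncard _ : ℕ) : ℂ) = 0
  rw [neg_eq_zero, Nat.cast_eq_zero]
  refine ncard_eq_zero_of_forall_notMem ?_
  rintro n ⟨hn, h1, h2⟩
  have hn' : (0 : ℤ) < n := by exact_mod_cast hn
  have hw1 : w.1 ≤ 0 := nonpos_of_mul_nonpos_right (by omega) hn'
  have hw2 : w.2 ≤ 0 := nonpos_of_mul_nonpos_right (by omega) hn'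
  exact (mul_nonneg_of_nonpos_of_nonpos hw1 hw2).not_gt hw

lemma geomPS_sub_mul_monoPS_of_le {p p' : ℕ × ℕ} (h : p' ≤ p) :
    geomPS ((p.1 : ℤ) - p'.1, (p.2 : ℤ) - p'.2) * monoPS p =
      -(geomPS ((p'.1 : ℤ) - p.1, (p'.2 : ℤ) - p.2) * monoPS p') := by
  obtain ⟨d, rfl⟩ := exists_add_of_le h
  simp only [Prod.fst_add, Prod.snd_add, Nat.cast_add, add_sub_cancel_left, sub_add_cancel_left]
  rw [geomPS_neg_natCast, monoPS_add]
  ring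

lemma geomPS_sub_mul_monoPS (p p' : ℕ × ℕ) :
    geomPS ((p.1 : ℤ) - p'.1, (p.2 : ℤ) - p'.2) * monoPS p =
      -(geomPS ((p'.1 : ℤ) - p.1, (p'.2 : ℤ) - p.2) * monoPS p') := by
  by_cases h : p' ≤ p
  · exact geomPS_sub_mul_monoPS_of_le h
  by_cases h' : p ≤ p'
  · rw [geomPS_sub_mul_monoPS_of_le h', neg_neg]
  have hmixed : ((p.1 : ℤ) - p'.1) * ((p.2 : ℤ) - p'.2) < 0 := by
    rw [Prod.le_def] at h h'
    rcases (show (p'.1 < p.1 ∧ p.2 < p'.2) ∨ (p.1 < p'.1 ∧ p'.2 < p.2) by omega) with hs | hs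
    · exact mul_neg_of_pos_of_neg (by omega) (by omega)
    · exact mul_neg_of_neg_of_pos (by omega) (by omega)
  rw [geomPS_eq_zero_of_mul_neg _ hmixed, geomPS_eq_zero_of_mul_neg _ (by linarith), zero_mul,
    zero_mul, neg_zero]

/-- `f/f' = -P'_2/P'_1` is stated as `f·P'_1 = -f'·P'_2`. -/
theorem stmt16_general (l : ℕ) (f : PS) (P : ℕ → ℕ × ℕ) :
    tupA P 0 = tupA P 1 ∧
    (∀ j, 1 ≤ j → j ≤ l - 1 → tupA P j = tupB l P j) ∧
    (Sop f * geomPS (wExpA l P)) * monoPS (tupB l P 0) =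
      -((Sop f * geomPS (-(wExpA l P).1, -(wExpA l P).2)) * monoPS (tupB l P 1)) := by
  refine ⟨by simp [tupA], fun j hj _ => by simp [tupA, tupB, Nat.one_le_iff_ne_zero.mp hj], ?_⟩
  have hw : wExpA l P = (((tupB l P 0).1 : ℤ) - (tupB l P 1).1,
      ((tupB l P 0).2 : ℤ) - (tupB l P 1).2) := by
    simp only [wExpA, tupB, Smono, if_pos, one_ne_zero, if_false, Nat.sub_self]
    push_cast
    ext <;> ring
  rw [hw, mul_assoc, mul_assoc, geomPS_sub_mul_monoPS, neg_sub, neg_sub, mul_neg]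

/-- For any simple vector `v`, writing `Av = f·[P_1,…,P_l]` and `Bv = f'·[P'_1,…,P'_l]`
(as given by the definitions of `A` and `B`), one has `P_1 = P_2`, `P_j = P'_j` for
`2 ≤ j ≤ l`, and `f/f' = -P'_2/P'_1` (stated multiplicatively: `f·P'_1 = -f'·P'_2`). -/
theorem stmt16 (k l : ℕ) (hk : 0 < k) (hl : 2 ≤ l)
    (f : PS) (P : ℕ → ℕ × ℕ) (hP : SimpleTuple l P) :
    tupA P 0 = tupA P 1 ∧
    (∀ j, 1 ≤ j → j ≤ l - 1 → tupA P j = tupB l P j) ∧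
    (Sop f * geomPS (wExpA l P)) * monoPS (tupB l P 0) =
      -((Sop f * geomPS (-(wExpA l P).1, -(wExpA l P).2)) * monoPS (tupB l P 1)) :=
  stmt16_general l f P
end
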